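/- Let M be the model with a single world s where p is true and sRs (a reflexive loop), and let N be the model with a single world t where p is true and the relation is empty. Both models are symmetric, transitive, and Euclidean; (M,s) and (N,t) satisfy exactly the same LEA-formulas, yet M,s ⊭ □⊥ while N,t ⊨ □⊥. Consequently, LEA is less expressive than ML on the class of all models, on the class of symmetric models, on the class of transitive models, and on the class of Euclidean models. -/
import Mathlib


/-- The language LEA of essence and accident. -/
inductive LEAForm : Type
  | atom : ℕ → LEAForm
  | neg : LEAForm → LEAForm
  | and : LEAForm → LEAForm → LEAForm
  | ess : LEAForm → LEAForm

/-- The language ML of modal logic. -/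
inductive MLForm : Type
  | atom : ℕ → MLForm
  | neg : MLForm → MLForm
  | and : MLForm → MLForm → MLForm
  | box : MLForm → MLForm

/-- A Kripke model. -/
structure Model (W : Type) where
  R : W → W → Prop
  V : ℕ → W → Prop

/-- Satisfaction for LEA. -/
def satLEA {W : Type} (M : Model W) : W → LEAForm → Prop
  | w, .atom p => M.V p w
  | w, .neg φ => ¬ satLEA M w φ
  | w, .and φ ψ => satLEA M w φ ∧ satLEA M w ψ
  | w, .ess φ => satLEA M w φ → ∀ v, M.R w v → satLEA M v φ

/-- Satisfaction for ML. -/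
def satML {W : Type} (M : Model W) : W → MLForm → Prop
  | w, .atom p => M.V p w
  | w, .neg φ => ¬ satML M w φ
  | w, .and φ ψ => satML M w φ ∧ satML M w ψ
  | w, .box φ => ∀ v, M.R w v → satML M v φ

/-- ML is at least as expressive as LEA on the class C of models. -/
def LEAtoML (C : ∀ W : Type, Model W → Prop) : Prop :=
  ∀ φ : LEAForm, ∃ ψ : MLForm, ∀ (W : Type) [Nonempty W] (M : Model W), C W M →
    ∀ s : W, satLEA M s φ ↔ satML M s ψ

/-- LEA is at least as expressive as ML on the class C of models. -/
def MLtoLEA (C : ∀ W : Type, Model W → Prop) : Prop :=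
  ∀ ψ : MLForm, ∃ φ : LEAForm, ∀ (W : Type) [Nonempty W] (M : Model W), C W M →
    ∀ s : W, satLEA M s φ ↔ satML M s ψ

/-- LEA is less expressive than ML on the class C of models. -/
def LEAlessExp (C : ∀ W : Type, Model W → Prop) : Prop :=
  LEAtoML C ∧ ¬ MLtoLEA C

/-- The model M: a single world with a reflexive loop, where p (= atom 0) is true. -/
def Mrefl : Model Unit := ⟨fun _ _ => True, fun p _ => p = 0⟩

/-- The model N: a single world with the empty relation, where p (= atom 0) is true. -/
def Nirr : Model Unit := ⟨fun _ _ => False, fun p _ => p = 0⟩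

/-- ⊥, defined as usual. -/
def botM : MLForm := .and (.atom 0) (.neg (.atom 0))


def leaTrans : LEAForm → MLForm
  | .atom p => .atom p
  | .neg φ => .neg (leaTrans φ)
  | .and φ ψ => .and (leaTrans φ) (leaTrans ψ)
  | .ess φ => .neg (.and (leaTrans φ) (.neg (.box (leaTrans φ))))

lemma trans_correct {W : Type} (M : Model W) (φ : LEAForm) (s : W) :
    satLEA M s φ ↔ satML M s (leaTrans φ) := by
  induction φ generalizing s with
  | atom p => simp [satLEA, satML, leaTrans]
  | neg φ ih => simp [satLEA, satML, leaTrans, ih]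
  | and φ ψ ih1 ih2 => simp [satLEA, satML, leaTrans, ih1, ih2]
  | ess φ ih =>
    simp only [satLEA, satML, leaTrans, ih]
    tauto

lemma lea_equiv (φ : LEAForm) : satLEA Mrefl () φ ↔ satLEA Nirr () φ := by
  induction φ with
  | atom p => simp [satLEA, Mrefl, Nirr]
  | neg φ ih => simp [satLEA, ih]
  | and φ ψ ih1 ih2 => simp [satLEA, ih1, ih2]
  | ess φ ih =>
    simp only [satLEA, Mrefl, Nirr]
    constructor
    · intro _ _ v h; exact h.elim
    · intro _ h v _; cases v; exact h

lemma lessExp (C : ∀ W : Type, Model W → Prop) (hM : C Unit Mrefl) (hN : C Unit Nirr) :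
    LEAlessExp C := by
  constructor
  · intro φ
    exact ⟨leaTrans φ, fun W _ M _ s => trans_correct M φ s⟩
  · intro h
    obtain ⟨φ, hφ⟩ := h (.box botM)
    have h1 := hφ Unit Mrefl hM ()
    have h2 := hφ Unit Nirr hN ()
    have hMbox : ¬ satML Mrefl () (.box botM) := by
      intro h; exact (h () trivial).2 (h () trivial).1
    have hNbox : satML Nirr () (.box botM) := fun v hv => hv.elim
    exact hMbox (h1.mp (lea_equiv φ |>.mpr (h2.mpr hNbox)))

theorem stmt2 :
    (∀ a b, Mrefl.R a b → Mrefl.R b a) ∧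
    (∀ a b c, Mrefl.R a b → Mrefl.R b c → Mrefl.R a c) ∧
    (∀ a b c, Mrefl.R a b → Mrefl.R a c → Mrefl.R b c) ∧
    (∀ a b, Nirr.R a b → Nirr.R b a) ∧
    (∀ a b c, Nirr.R a b → Nirr.R b c → Nirr.R a c) ∧
    (∀ a b c, Nirr.R a b → Nirr.R a c → Nirr.R b c) ∧
    (∀ φ : LEAForm, satLEA Mrefl () φ ↔ satLEA Nirr () φ) ∧
    (¬ satML Mrefl () (.box botM)) ∧ satML Nirr () (.box botM) ∧
    LEAlessExp (fun _ _ => True) ∧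
    LEAlessExp (fun _ M => ∀ a b, M.R a b → M.R b a) ∧
    LEAlessExp (fun _ M => ∀ a b c, M.R a b → M.R b c → M.R a c) ∧
    LEAlessExp (fun _ M => ∀ a b c, M.R a b → M.R a c → M.R b c) := by
  refine ⟨fun _ _ _ => trivial, fun _ _ _ _ _ => trivial, fun _ _ _ _ _ => trivial,
    fun _ _ h => h.elim, fun _ _ _ h _ => h.elim, fun _ _ _ h _ => h.elim,
    lea_equiv, ?_, fun v hv => hv.elim, ?_, ?_, ?_, ?_⟩
  · intro h; exact (h () trivial).2 (h () trivial).1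
  · exact lessExp _ trivial trivial
  · exact lessExp _ (fun _ _ _ => trivial) (fun _ _ h => h.elim)
  · exact lessExp _ (fun _ _ _ _ _ => trivial) (fun _ _ _ h _ => h.elim)
  · exact lessExp _ (fun _ _ _ _ _ => trivial) (fun _ _ _ h _ => h.elim)
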